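/- arXiv:1609.08542 — 2 statements merged into one kernel-verified Lean document; each statement's English description precedes it below -/
import Mathlib

section
/- (Two-sided bound on ratios of q-factorials) For all natural numbers n and k, one has [n]_q! / ((1-q)^k · C(|q|)) ≤ [n+k]_q! ≤ (D(q)/(1-q)^k) · [n]_q!. -/
/-- The q-integer `[n]_q = (1 - q^n)/(1 - q)`. -/
noncomputable def qInt (q : ℝ) (n : ℕ) : ℝ := (1 - q ^ n) / (1 - q)

/-- The q-factorial `[n]_q! = [1]_q ⋯ [n]_q`, with `[0]_q! = 1`. -/
noncomputable def qFact (q : ℝ) : ℕ → ℝ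
  | 0 => 1
  | n + 1 => qFact q n * qInt q (n + 1)

/-- The constant `C(t) = ∏_{i=1}^∞ (1 - t^i)⁻¹` for `0 ≤ t < 1`. -/
noncomputable def Cconst (t : ℝ) : ℝ := ∏' i : ℕ, (1 - t ^ (i + 1))⁻¹

/-- The constant `D(q) = ∏_{i=1}^∞ (1 + |q|^i)` for `-1 < q < 1`. -/
noncomputable def Dconst (q : ℝ) : ℝ := ∏' i : ℕ, (1 + |q| ^ (i + 1))

/-!
Factoring `[n+k]_q! = [n]_q! · ∏_{j<k} [n+j+1]_q` reduces the theorem to bounding each factor: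
since `|q^m| ≤ |q|^m`, the numerator of `[m]_q = (1 - q^m)/(1 - q)` lies between `1 - |q|^m`
and `1 + |q|^m`. Over `m = n+1, …, n+k`, the products of the upper bounds and of the reciprocals
of the lower bounds are partial products of the infinite products defining `D(q)` and `C(|q|)`,
and since all their factors are `≥ 1`, a partial product never exceeds the full one.
-/

open Finset

namespace Real

theorem prod_le_tprod_of_one_le {ι : Type*} {f : ι → ℝ} (hf : Multipliable f)
    (h : ∀ i, 1 ≤ f i) (s : Finset ι) : ∏ i ∈ s, f i ≤ ∏' i, f i :=
  ge_of_tendsto hf.hasProd <|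
    Filter.eventually_atTop.2 ⟨s, fun _ hst => Finset.prod_mono_set_of_one_le h hst⟩

theorem prod_range_add_le_tprod_of_one_le {f : ℕ → ℝ} (hf : Multipliable f)
    (h : ∀ i, 1 ≤ f i) (n k : ℕ) : ∏ j ∈ range k, f (n + j) ≤ ∏' i, f i := by
  simpa [prod_Ico_eq_prod_range] using prod_le_tprod_of_one_le hf h (Ico n (n + k))

end Real

section Constants

variable {t : ℝ}

theorem summable_pow_succ (ht0 : 0 ≤ t) (ht1 : t < 1) : Summable fun i : ℕ => t ^ (i + 1) := by
  simpa [pow_succ] using (summable_geometric_of_lt_one ht0 ht1).mul_right t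

theorem inv_Cconst_le_prod_one_sub_pow (ht0 : 0 ≤ t) (ht1 : t < 1) (n k : ℕ) :
    (Cconst t)⁻¹ ≤ ∏ j ∈ range k, (1 - t ^ (n + j + 1)) := by
  have hpos : ∀ i : ℕ, 0 < 1 - t ^ (i + 1) := fun i =>
    sub_pos.2 (pow_lt_one₀ ht0 ht1 i.succ_ne_zero)
  have hmul : Multipliable fun i : ℕ => (1 - t ^ (i + 1))⁻¹ := by
    refine Real.multipliable_of_summable_log (fun i => inv_pos.2 (hpos i)) ?_
    simpa [Real.log_inv, sub_eq_add_neg] using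
      (Real.summable_log_one_add_of_summable (summable_pow_succ ht0 ht1).neg).neg
  have hle : ∏ j ∈ range k, (1 - t ^ (n + j + 1))⁻¹ ≤ Cconst t :=
    Real.prod_range_add_le_tprod_of_one_le hmul
      (fun i => one_le_inv₀ (hpos i) |>.2 (sub_le_self _ (pow_nonneg ht0 _))) n k
  rw [prod_inv_distrib] at hle
  exact inv_le_of_inv_le₀ (prod_pos fun j _ => hpos (n + j)) hle

theorem prod_one_add_abs_pow_le_Dconst {q : ℝ} (hq : |q| < 1) (n k : ℕ) :
    ∏ j ∈ range k, (1 + |q| ^ (n + j + 1)) ≤ Dconst q :=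
  Real.prod_range_add_le_tprod_of_one_le
    (Real.multipliable_one_add_of_summable (summable_pow_succ (abs_nonneg q) hq))
    (fun _ => le_add_of_nonneg_right (pow_nonneg (abs_nonneg q) _)) n k

end Constants

theorem qFact_add (q : ℝ) (n k : ℕ) :
    qFact q (n + k) = qFact q n * ∏ j ∈ range k, qInt q (n + j + 1) := by
  induction k with
  | zero => simp
  | succ k ih =>
    rw [prod_range_succ, ← mul_assoc, ← ih]
    rfl

section QFactorial

variable {q : ℝ}

theorem one_sub_abs_pow_div_le_qInt (hq : q < 1) (m : ℕ) : (1 - |q| ^ m) / (1 - q) ≤ qInt q m :=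
  div_le_div_of_nonneg_right (sub_le_sub_left ((le_abs_self _).trans (abs_pow q m).le) 1)
    (sub_pos.2 hq).le

theorem qInt_le_one_add_abs_pow_div (hq : q < 1) (m : ℕ) : qInt q m ≤ (1 + |q| ^ m) / (1 - q) :=
  div_le_div_of_nonneg_right
    (by rw [sub_eq_add_neg]; exact add_le_add_right ((neg_le_abs _).trans (abs_pow q m).le) 1)
    (sub_pos.2 hq).le

theorem one_sub_abs_pow_div_pos (hq₁ : -1 < q) (hq₂ : q < 1) {m : ℕ} (hm : m ≠ 0) :
    0 < (1 - |q| ^ m) / (1 - q) :=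
  div_pos (sub_pos.2 (pow_lt_one₀ (abs_nonneg q) (abs_lt.2 ⟨hq₁, hq₂⟩) hm)) (sub_pos.2 hq₂)

theorem qInt_pos (hq₁ : -1 < q) (hq₂ : q < 1) {m : ℕ} (hm : m ≠ 0) : 0 < qInt q m :=
  (one_sub_abs_pow_div_pos hq₁ hq₂ hm).trans_le (one_sub_abs_pow_div_le_qInt hq₂ m)

theorem qFact_pos (hq₁ : -1 < q) (hq₂ : q < 1) (n : ℕ) : 0 < qFact q n := by
  induction n with
  | zero => exact one_pos
  | succ n ih => exact mul_pos ih (qInt_pos hq₁ hq₂ n.succ_ne_zero)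

theorem inv_Cconst_div_le_prod_qInt (hq₁ : -1 < q) (hq₂ : q < 1) (n k : ℕ) :
    (Cconst |q|)⁻¹ / (1 - q) ^ k ≤ ∏ j ∈ range k, qInt q (n + j + 1) :=
  calc (Cconst |q|)⁻¹ / (1 - q) ^ k
      ≤ (∏ j ∈ range k, (1 - |q| ^ (n + j + 1))) / (1 - q) ^ k :=
        div_le_div_of_nonneg_right
          (inv_Cconst_le_prod_one_sub_pow (abs_nonneg q) (abs_lt.2 ⟨hq₁, hq₂⟩) n k)
          (pow_nonneg (sub_pos.2 hq₂).le k)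
    _ = ∏ j ∈ range k, (1 - |q| ^ (n + j + 1)) / (1 - q) := by
        rw [prod_div_distrib, prod_const, card_range]
    _ ≤ ∏ j ∈ range k, qInt q (n + j + 1) :=
        prod_le_prod (fun _ _ => (one_sub_abs_pow_div_pos hq₁ hq₂ (Nat.succ_ne_zero _)).le)
          (fun _ _ => one_sub_abs_pow_div_le_qInt hq₂ _)

theorem prod_qInt_le_Dconst_div (hq₁ : -1 < q) (hq₂ : q < 1) (n k : ℕ) :
    ∏ j ∈ range k, qInt q (n + j + 1) ≤ Dconst q / (1 - q) ^ k :=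
  calc ∏ j ∈ range k, qInt q (n + j + 1)
      ≤ ∏ j ∈ range k, (1 + |q| ^ (n + j + 1)) / (1 - q) :=
        prod_le_prod (fun _ _ => (qInt_pos hq₁ hq₂ (Nat.succ_ne_zero _)).le)
          (fun _ _ => qInt_le_one_add_abs_pow_div hq₂ _)
    _ = (∏ j ∈ range k, (1 + |q| ^ (n + j + 1))) / (1 - q) ^ k := by
        rw [prod_div_distrib, prod_const, card_range]
    _ ≤ Dconst q / (1 - q) ^ k :=
        div_le_div_of_nonneg_right (prod_one_add_abs_pow_le_Dconst (abs_lt.2 ⟨hq₁, hq₂⟩) n k)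
          (pow_nonneg (sub_pos.2 hq₂).le k)

end QFactorial

/-- Two-sided bound on ratios of q-factorials. -/
theorem qFact_ratio_bounds (q : ℝ) (hq₁ : -1 < q) (hq₂ : q < 1) (n k : ℕ) :
    qFact q n / ((1 - q) ^ k * Cconst |q|) ≤ qFact q (n + k) ∧
    qFact q (n + k) ≤ (Dconst q / (1 - q) ^ k) * qFact q n := by
  have hF : 0 ≤ qFact q n := (qFact_pos hq₁ hq₂ n).le
  rw [qFact_add]
  constructor
  · calc qFact q n / ((1 - q) ^ k * Cconst |q|)
        = qFact q n * ((Cconst |q|)⁻¹ / (1 - q) ^ k) := by ring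
      _ ≤ _ := mul_le_mul_of_nonneg_left (inv_Cconst_div_le_prod_qInt hq₁ hq₂ n k) hF
  · rw [mul_comm]
    exact mul_le_mul_of_nonneg_right (prod_qInt_le_Dconst_div hq₁ hq₂ n k) hF
end

section
/- (Annihilation operators acting on the vectors ξ_{s,t}) Under the q-commutation hypotheses below, for all natural numbers s and t one has c*·ξ_{s,t} = [s]_q·ξ_{s-1,t} + q^{s+k}·[t]_q·ξ_{s,t-1} and c_r*·ξ_{s,t} = q^{t+k}·[s]_q·ξ_{s-1,t} + [t]_q·ξ_{s,t-1}, where a term is interpreted as 0 when its coefficient [0]_q = 0 occurs (i.e. when s = 0 or t = 0 the corresponding term with negative index vanishes). -/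
/-!
Both formulas come from moving the annihilator past the creation operators. From
`a x = q x a + 1` one gets `a x^s = q^s x^s a + [s]_q x^(s-1)`, and from `a y = y a + W` with
`W y = q y W` one gets `a y^t = y^t a + [t]_q y^(t-1) W`. On `ξ` the annihilator vanishes and `W`
acts as `q^k`, so `a (x^s y^t ξ)` produces the two terms, the second one picking up `q^s` from `a`
passing `x^s`. The formula for `c_r*` is the same computation with the roles of `c` and `c_r`
exchanged, since `c^s` and `c_r^t` commute.
-/

open ContinuousLinearMap

lemma qInt_zero (q : ℝ) : qInt q 0 = 0 := by simp [qInt]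

lemma qInt_succ {q : ℝ} (hq : q ≠ 1) (n : ℕ) : qInt q (n + 1) = qInt q n + q ^ n := by
  have : (1 : ℝ) - q ≠ 0 := sub_ne_zero.mpr hq.symm
  unfold qInt
  field_simp
  ring

lemma qInt_succ_eq_one_add_mul {q : ℝ} (hq : q ≠ 1) (n : ℕ) :
    qInt q (n + 1) = 1 + q * qInt q n := by
  have : (1 : ℝ) - q ≠ 0 := sub_ne_zero.mpr hq.symm
  unfold qInt
  field_simp
  ring

section Algebra

variable {A : Type*} [Ring A] [Algebra ℂ A] {q : ℝ}

-- `s - 1` is truncated at `s = 0`, where the coefficient `[0]_q = 0` kills the term.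
lemma qInt_smul_pow_pred_mul (q : ℝ) (x y : A) (s : ℕ) :
    ((qInt q s : ℝ) : ℂ) • (x ^ (s - 1) * (x * y)) = ((qInt q s : ℝ) : ℂ) • (x ^ s * y) := by
  cases s with
  | zero => simp [qInt_zero]
  | succ n => rw [Nat.add_sub_cancel, ← mul_assoc, ← pow_succ]

lemma mul_pow_of_qCCR (hq : q ≠ 1) {a x : A} (h : a * x = (q : ℂ) • (x * a) + 1) (s : ℕ) :
    a * x ^ s = (q : ℂ) ^ s • (x ^ s * a) + ((qInt q s : ℝ) : ℂ) • x ^ (s - 1) := by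
  induction s with
  | zero => simp [qInt_zero]
  | succ n ih =>
    have hpred := qInt_smul_pow_pred_mul q x 1 n
    rw [mul_one, mul_one] at hpred
    rw [pow_succ, ← mul_assoc, ih, add_mul, smul_mul_assoc, smul_mul_assoc, mul_assoc, h, hpred,
      mul_add, mul_one, mul_smul_comm, ← mul_assoc, ← pow_succ, qInt_succ hq n, Nat.add_sub_cancel]
    push_cast
    module

lemma mul_pow_of_commutator_qcommute (hq : q ≠ 1) {a y w : A} (h : a * y = y * a + w)
    (hwy : w * y = (q : ℂ) • (y * w)) (t : ℕ) :
    a * y ^ t = y ^ t * a + ((qInt q t : ℝ) : ℂ) • (y ^ (t - 1) * w) := by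
  induction t with
  | zero => simp [qInt_zero]
  | succ n ih =>
    have hpred := congrArg ((q : ℂ) • ·) (qInt_smul_pow_pred_mul q y w n)
    simp only [smul_comm (q : ℂ)] at hpred
    rw [pow_succ, ← mul_assoc, ih, add_mul, smul_mul_assoc, mul_assoc, mul_assoc, hwy, h,
      mul_smul_comm, hpred, mul_add, ← mul_assoc, ← pow_succ, qInt_succ_eq_one_add_mul hq n,
      Nat.add_sub_cancel]
    push_cast
    module

end Algebra

section Operators

variable {E : Type*} [NormedAddCommGroup E] [NormedSpace ℂ E] {q : ℝ}

lemma apply_pow_of_commutator_qcommute (hq : q ≠ 1) {a y w : E →L[ℂ] E}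
    (h : a * y = y * a + w) (hwy : w * y = (q : ℂ) • (y * w)) {k : ℕ} {ξ : E}
    (ha : a ξ = 0) (hw : w ξ = (q : ℂ) ^ k • ξ) (t : ℕ) :
    a ((y ^ t) ξ) = ((q ^ k * qInt q t : ℝ) : ℂ) • (y ^ (t - 1)) ξ := by
  rw [← mul_apply_eq_comp, mul_pow_of_commutator_qcommute hq h hwy t]
  simp only [add_apply, smul_apply, mul_apply_eq_comp, ha, hw, map_zero, map_smul, zero_add,
    smul_smul]
  push_cast
  ring_nf

lemma apply_pow_mul_pow_of_qCCR (hq : q ≠ 1) {a x y w : E →L[ℂ] E}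
    (hx : a * x = (q : ℂ) • (x * a) + 1) (hy : a * y = y * a + w)
    (hwy : w * y = (q : ℂ) • (y * w)) {k : ℕ} {ξ : E}
    (ha : a ξ = 0) (hw : w ξ = (q : ℂ) ^ k • ξ) (s t : ℕ) :
    a ((x ^ s * y ^ t) ξ) =
      ((qInt q s : ℝ) : ℂ) • ((x ^ (s - 1) * y ^ t) ξ) +
      ((q ^ (s + k) * qInt q t : ℝ) : ℂ) • ((x ^ s * y ^ (t - 1)) ξ) := by
  rw [mul_apply_eq_comp, ← mul_apply_eq_comp a, mul_pow_of_qCCR hq hx s]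
  simp only [add_apply, smul_apply, mul_apply_eq_comp,
    apply_pow_of_commutator_qcommute hq hy hwy ha hw t, map_smul]
  match_scalars <;> ring

end Operators

theorem annihilation_on_xi_general (q : ℝ) (hq₂ : q < 1)
    {H : Type*} [NormedAddCommGroup H] [InnerProductSpace ℂ H] [CompleteSpace H]
    (c cr W : H →L[ℂ] H)
    (h1 : adjoint c * c = (q : ℂ) • (c * adjoint c) + 1)
    (h2 : adjoint cr * cr = (q : ℂ) • (cr * adjoint cr) + 1)
    (h3 : c * cr = cr * c)
    (h4 : adjoint c * cr = cr * adjoint c + W)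
    (h5 : adjoint cr * c = c * adjoint cr + W)
    (h6 : W * c = (q : ℂ) • (c * W))
    (h7 : W * cr = (q : ℂ) • (cr * W))
    (k : ℕ) (ξ : H)
    (hc : adjoint c ξ = 0) (hcr : adjoint cr ξ = 0)
    (hW : W ξ = ((q : ℂ) ^ k) • ξ) (s t : ℕ) :
    adjoint c ((c ^ s * cr ^ t) ξ) =
      ((qInt q s : ℝ) : ℂ) • ((c ^ (s - 1) * cr ^ t) ξ) +
      ((q ^ (s + k) * qInt q t : ℝ) : ℂ) • ((c ^ s * cr ^ (t - 1)) ξ) ∧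
    adjoint cr ((c ^ s * cr ^ t) ξ) =
      ((q ^ (t + k) * qInt q s : ℝ) : ℂ) • ((c ^ (s - 1) * cr ^ t) ξ) +
      ((qInt q t : ℝ) : ℂ) • ((c ^ s * cr ^ (t - 1)) ξ) := by
  have hq : q ≠ 1 := hq₂.ne
  have hcomm (m n : ℕ) : c ^ m * cr ^ n = cr ^ n * c ^ m := Commute.pow_pow h3 m n
  refine ⟨apply_pow_mul_pow_of_qCCR hq h1 h4 h7 hc hW s t, ?_⟩
  rw [hcomm, hcomm, hcomm, add_comm]
  exact apply_pow_mul_pow_of_qCCR hq h2 h5 h6 hcr hW t s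

/-- Annihilation operators acting on the vectors `ξ_{s,t} = c^s c_r^t ξ`. -/
theorem annihilation_on_xi (q : ℝ) (hq₁ : -1 < q) (hq₂ : q < 1)
    {H : Type*} [NormedAddCommGroup H] [InnerProductSpace ℂ H] [CompleteSpace H]
    (c cr W : H →L[ℂ] H)
    (h1 : adjoint c * c = (q : ℂ) • (c * adjoint c) + 1)
    (h2 : adjoint cr * cr = (q : ℂ) • (cr * adjoint cr) + 1)
    (h3 : c * cr = cr * c)
    (h4 : adjoint c * cr = cr * adjoint c + W)
    (h5 : adjoint cr * c = c * adjoint cr + W)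
    (h6 : W * c = (q : ℂ) • (c * W))
    (h7 : W * cr = (q : ℂ) • (cr * W))
    (h8 : adjoint c * W = (q : ℂ) • (W * adjoint c))
    (h9 : adjoint cr * W = (q : ℂ) • (W * adjoint cr))
    (k : ℕ) (ξ : H) (hξ : ‖ξ‖ = 1)
    (hc : adjoint c ξ = 0) (hcr : adjoint cr ξ = 0)
    (hW : W ξ = ((q : ℂ) ^ k) • ξ) (s t : ℕ) :
    adjoint c ((c ^ s * cr ^ t) ξ) =
      ((qInt q s : ℝ) : ℂ) • ((c ^ (s - 1) * cr ^ t) ξ) +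
      ((q ^ (s + k) * qInt q t : ℝ) : ℂ) • ((c ^ s * cr ^ (t - 1)) ξ) ∧
    adjoint cr ((c ^ s * cr ^ t) ξ) =
      ((q ^ (t + k) * qInt q s : ℝ) : ℂ) • ((c ^ (s - 1) * cr ^ t) ξ) +
      ((qInt q t : ℝ) : ℂ) • ((c ^ s * cr ^ (t - 1)) ξ) :=
  annihilation_on_xi_general q hq₂ c cr W h1 h2 h3 h4 h5 h6 h7 k ξ hc hcr hW s t
end
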